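/- arXiv:1412.2456 — 3 statements merged into one kernel-verified Lean document; each statement's English description precedes it below -/
import Mathlib

section
/- Let b, c, T be real numbers with 0 ≤ c < b < T. Then ∫_{b}^{T} (s² − b²)^{−1/2} (s² − c²)^{−1/2} ds ≤ (1/(2b)) · ln(1 + 4T²/(b² − c²)). -/
/-!
Since `s / b ≥ 1` on `(b, T)`, the integrand is dominated by `s / (b √(s² - b²) √(s² - c²))`,
which is the derivative of `b⁻¹ log (√(s² - b²) + √(s² - c²))`. By the fundamental theorem of
calculus the integral is at most `(2b)⁻¹ log (X² / (b² - c²))` with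
`X = √(T² - b²) + √(T² - c²)`, and `X² ≤ 2 (2T² - b² - c²) ≤ b² - c² + 4T²`.
-/

open MeasureTheory Set Real

theorem lintegral_Ioo_ofReal_deriv_eq_sub {f f' : ℝ → ℝ} {a b : ℝ} (hab : a ≤ b)
    (hcont : ContinuousOn f (Icc a b)) (hderiv : ∀ x ∈ Ioo a b, HasDerivAt f (f' x) x)
    (hpos : ∀ x ∈ Ioo a b, 0 ≤ f' x) :
    ∫⁻ x in Ioo a b, ENNReal.ofReal (f' x) = ENNReal.ofReal (f b - f a) := by
  have hint : IntegrableOn f' (Ioc a b) :=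
    intervalIntegral.integrableOn_deriv_of_nonneg hcont hderiv hpos
  rw [← ofReal_integral_eq_lintegral_ofReal (hint.mono_set Ioo_subset_Ioc_self)
      ((ae_restrict_iff' measurableSet_Ioo).2 (Filter.Eventually.of_forall hpos)),
    ← integral_Ioc_eq_integral_Ioo, ← intervalIntegral.integral_of_le hab,
    intervalIntegral.integral_eq_sub_of_hasDerivAt_of_le hab hcont hderiv
      ((intervalIntegrable_iff_integrableOn_Ioc_of_le hab).2 hint)]

theorem hasDerivAt_sqrt_sq_sub {a s : ℝ} (hs : a < s ^ 2) :
    HasDerivAt (fun x => √(x ^ 2 - a)) (s / √(s ^ 2 - a)) s := by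
  have hsq : HasDerivAt (fun x : ℝ => x ^ 2 - a) (2 * s) s := by
    simpa using (hasDerivAt_pow 2 s).sub_const a
  refine ((hasDerivAt_sqrt (sub_pos.2 hs).ne').comp s hsq).congr_deriv ?_
  field_simp

theorem hasDerivAt_log_sqrt_add_sqrt {a a' s : ℝ} (hs : a < s ^ 2) (hs' : a' < s ^ 2) :
    HasDerivAt (fun x => log (√(x ^ 2 - a) + √(x ^ 2 - a')))
      (s * ((√(s ^ 2 - a))⁻¹ * (√(s ^ 2 - a'))⁻¹)) s := by
  have hA : 0 < √(s ^ 2 - a) := sqrt_pos.2 (sub_pos.2 hs)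
  have hB : 0 < √(s ^ 2 - a') := sqrt_pos.2 (sub_pos.2 hs')
  refine (((hasDerivAt_sqrt_sq_sub hs).add (hasDerivAt_sqrt_sq_sub hs')).log
    (by simp only [Pi.add_apply]; positivity)).congr_deriv ?_
  simp only [Pi.add_apply]
  field_simp
  ring

theorem log_sqrt_add_sqrt_sub_log_sqrt_le {b c T : ℝ} (hcb : c ^ 2 < b ^ 2) (hbT : b ^ 2 ≤ T ^ 2) :
    log (√(T ^ 2 - b ^ 2) + √(T ^ 2 - c ^ 2)) - log (√(b ^ 2 - c ^ 2)) ≤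
      1 / 2 * log (1 + 4 * T ^ 2 / (b ^ 2 - c ^ 2)) := by
  set X := √(T ^ 2 - b ^ 2) + √(T ^ 2 - c ^ 2)
  have hd : 0 < b ^ 2 - c ^ 2 := sub_pos.2 hcb
  have hX : 0 < X := add_pos_of_nonneg_of_pos (sqrt_nonneg _) (sqrt_pos.2 (by linarith))
  have hX2 : X ^ 2 ≤ (b ^ 2 - c ^ 2) + 4 * T ^ 2 := by
    have := add_sq_le (a := √(T ^ 2 - b ^ 2)) (b := √(T ^ 2 - c ^ 2))
    rw [sq_sqrt (by linarith), sq_sqrt (by linarith)] at this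
    nlinarith [sq_nonneg b, sq_nonneg c]
  have hlog : log (X ^ 2 / (b ^ 2 - c ^ 2)) ≤ log (1 + 4 * T ^ 2 / (b ^ 2 - c ^ 2)) := by
    gcongr
    rwa [one_add_div hd.ne', div_le_div_iff_of_pos_right hd]
  rw [log_div (by positivity) hd.ne', log_pow] at hlog
  rw [log_sqrt hd.le]
  push_cast at hlog
  linarith

/-- Let `b, c, T` be real numbers with `0 ≤ c < b < T`. Then
`∫_{b}^{T} (s² − b²)^{−1/2} (s² − c²)^{−1/2} ds ≤ (1/(2b)) ln(1 + 4T²/(b² − c²))`. -/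
theorem stmt_11 (b c T : ℝ) (hc : 0 ≤ c) (hcb : c < b) (hbT : b < T) :
    (∫⁻ s in Ioo b T,
        ENNReal.ofReal ((Real.sqrt (s ^ 2 - b ^ 2))⁻¹ * (Real.sqrt (s ^ 2 - c ^ 2))⁻¹)) ≤
      ENNReal.ofReal (1 / (2 * b) * Real.log (1 + 4 * T ^ 2 / (b ^ 2 - c ^ 2))) := by
  have hb : 0 < b := hc.trans_lt hcb
  have hcb2 : c ^ 2 < b ^ 2 := by nlinarith
  set F := fun s => b⁻¹ * log (√(s ^ 2 - b ^ 2) + √(s ^ 2 - c ^ 2))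
  set g := fun s => b⁻¹ * (s * ((√(s ^ 2 - b ^ 2))⁻¹ * (√(s ^ 2 - c ^ 2))⁻¹))
  have hcont : ContinuousOn F (Icc b T) := by
    refine continuousOn_const.mul (ContinuousOn.log (by fun_prop) fun s hs => ?_)
    have : 0 < √(s ^ 2 - c ^ 2) := sqrt_pos.2 (by nlinarith [hs.1])
    positivity
  have hderiv : ∀ s ∈ Ioo b T, HasDerivAt F (g s) s := fun s hs =>
    (hasDerivAt_log_sqrt_add_sqrt (by nlinarith [hs.1]) (by nlinarith [hs.1])).const_mul b⁻¹
  have hg : ∀ s ∈ Ioo b T, 0 ≤ g s := fun s hs => by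
    have := hb.trans hs.1
    positivity
  calc _ ≤ ∫⁻ s in Ioo b T, ENNReal.ofReal (g s) := by
        refine setLIntegral_mono' measurableSet_Ioo fun s hs => ENNReal.ofReal_le_ofReal ?_
        have hsb : 1 ≤ b⁻¹ * s := by rw [← div_eq_inv_mul, one_le_div hb]; exact hs.1.le
        simp only [g]
        rw [← mul_assoc]
        exact le_mul_of_one_le_left (by positivity) hsb
    _ = ENNReal.ofReal (F T - F b) := lintegral_Ioo_ofReal_deriv_eq_sub hbT.le hcont hderiv hg
    _ ≤ _ := by
        refine ENNReal.ofReal_le_ofReal ?_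
        have hlog := log_sqrt_add_sqrt_sub_log_sqrt_le (T := T) hcb2 (by nlinarith)
        simp only [F, sub_self, sqrt_zero, zero_add, ← mul_sub, one_div, mul_inv] at hlog ⊢
        nlinarith [inv_pos.2 hb]
end

section
/- Let b, c, T, h be real numbers with 0 ≤ c < b < T and h > 0. Then ∫_{b}^{T} ( (s² − b²)^{−1/2} − ((s+h)² − b²)^{−1/2} ) (s² − c²)^{−1/2} ds ≤ (1/(2b)) · ln( 1 + (2Th + h²)/(b² − c²) + 2 sqrt((2Th + h²)/(b² − c²)) ). -/
/-!
With `δ = 2Th + h²` we have `(s + h)² − b² ≤ s² − b² + δ` on `[b, T]`, and `s / b ≥ 1`, so the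
integrand is at most `(s/b) ((s² − b²)^{-1/2} − (s² − b² + δ)^{-1/2}) (s² − c²)^{-1/2}`. The
factor `s` makes this an exact derivative, since
`d/ds log (√(s² − p) + √(s² − q)) = s / (√(s² − p) √(s² − q))`.
Being a nonnegative derivative it is integrable, and its primitive `Φ` (the difference of these
logarithms for `p = b²` and `p = b² − δ`, divided by `b`) satisfies `Φ T ≤ 0`, so the integral is
at most `−Φ b = (1/b) log ((√δ + √(b² − c²)) / √(b² − c²))`, which is the right-hand side.
-/

open MeasureTheory Set Real

noncomputable def logSqrtSum (p q x : ℝ) : ℝ := log (√(x ^ 2 - p) + √(x ^ 2 - q))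

noncomputable def logSqrtSumDeriv (p q s : ℝ) : ℝ := s / (√(s ^ 2 - p) * √(s ^ 2 - q))

theorem hasDerivAt_logSqrtSum {p q s : ℝ} (hp : p < s ^ 2) (hq : q < s ^ 2) :
    HasDerivAt (logSqrtSum p q) (logSqrtSumDeriv p q s) s := by
  have hP : 0 < √(s ^ 2 - p) := sqrt_pos.2 (sub_pos.2 hp)
  have hQ : 0 < √(s ^ 2 - q) := sqrt_pos.2 (sub_pos.2 hq)
  have hsq (r : ℝ) : HasDerivAt (fun x : ℝ => x ^ 2 - r) (2 * s) s := by
    simpa using (hasDerivAt_pow 2 s).sub_const r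
  refine ((((hsq p).sqrt (sub_pos.2 hp).ne').add ((hsq q).sqrt (sub_pos.2 hq).ne')).log
    (add_pos hP hQ).ne').congr_deriv ?_
  simp only [logSqrtSumDeriv, Pi.add_apply]
  field_simp
  ring

theorem continuousOn_logSqrtSum (p q : ℝ) : ContinuousOn (logSqrtSum p q) {x | q < x ^ 2} :=
  ContinuousOn.log (by fun_prop) fun _ hx =>
    (add_pos_of_nonneg_of_pos (sqrt_nonneg _) (sqrt_pos.2 (sub_pos.2 hx))).ne'

theorem logSqrtSum_le_logSqrtSum {p p' q x : ℝ} (hp : p' ≤ p) (hq : q < x ^ 2) :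
    logSqrtSum p q x ≤ logSqrtSum p' q x :=
  log_le_log (add_pos_of_nonneg_of_pos (sqrt_nonneg _) (sqrt_pos.2 (sub_pos.2 hq)))
    (by gcongr)

theorem logSqrtSumDeriv_le_logSqrtSumDeriv {p p' q s : ℝ} (hs : 0 ≤ s) (hp' : p' ≤ p)
    (hp : p < s ^ 2) (hq : q < s ^ 2) : logSqrtSumDeriv p' q s ≤ logSqrtSumDeriv p q s := by
  have hP : 0 < √(s ^ 2 - p) := sqrt_pos.2 (sub_pos.2 hp)
  have hQ : 0 < √(s ^ 2 - q) := sqrt_pos.2 (sub_pos.2 hq)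
  unfold logSqrtSumDeriv
  gcongr

section Primitive

variable {b T p q : ℝ}

theorem hasDerivAt_logSqrtSum_sub (hb : 0 ≤ b) (hp : p ≤ b ^ 2) (hq : q < b ^ 2) {s : ℝ}
    (hs : b < s) :
    HasDerivAt (fun x => logSqrtSum (b ^ 2) q x - logSqrtSum p q x)
      (logSqrtSumDeriv (b ^ 2) q s - logSqrtSumDeriv p q s) s := by
  have hbs : b ^ 2 < s ^ 2 := by gcongr
  exact (hasDerivAt_logSqrtSum hbs (hq.trans hbs)).sub
    (hasDerivAt_logSqrtSum (hp.trans_lt hbs) (hq.trans hbs))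

theorem continuousOn_logSqrtSum_sub (hb : 0 ≤ b) (hq : q < b ^ 2) :
    ContinuousOn (fun x => logSqrtSum (b ^ 2) q x - logSqrtSum p q x) (Icc b T) := by
  have hsub : Icc b T ⊆ {x | q < x ^ 2} := fun x hx => hq.trans_le (by gcongr; exact hx.1)
  exact ((continuousOn_logSqrtSum _ q).mono hsub).sub ((continuousOn_logSqrtSum p q).mono hsub)

theorem logSqrtSumDeriv_sub_nonneg (hb : 0 ≤ b) (hp : p ≤ b ^ 2) (hq : q < b ^ 2) {s : ℝ}
    (hs : b < s) : 0 ≤ logSqrtSumDeriv (b ^ 2) q s - logSqrtSumDeriv p q s := by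
  have hbs : b ^ 2 < s ^ 2 := by gcongr
  exact sub_nonneg.2 <| logSqrtSumDeriv_le_logSqrtSumDeriv (hb.trans hs.le) hp hbs (hq.trans hbs)

theorem integrableOn_logSqrtSumDeriv_sub (hb : 0 ≤ b) (hp : p ≤ b ^ 2) (hq : q < b ^ 2) :
    IntegrableOn (fun s => logSqrtSumDeriv (b ^ 2) q s - logSqrtSumDeriv p q s) (Ioc b T) :=
  intervalIntegral.integrableOn_deriv_of_nonneg (continuousOn_logSqrtSum_sub hb hq)
    (fun _ hs => hasDerivAt_logSqrtSum_sub hb hp hq hs.1)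
    (fun _ hs => logSqrtSumDeriv_sub_nonneg hb hp hq hs.1)

theorem integral_logSqrtSumDeriv_sub_le (hb : 0 ≤ b) (hbT : b ≤ T) (hp : p ≤ b ^ 2)
    (hq : q < b ^ 2) :
    ∫ s in b..T, (logSqrtSumDeriv (b ^ 2) q s - logSqrtSumDeriv p q s) ≤
      log (√(b ^ 2 - p) + √(b ^ 2 - q)) - log √(b ^ 2 - q) := by
  rw [intervalIntegral.integral_eq_sub_of_hasDerivAt_of_le hbT
    (continuousOn_logSqrtSum_sub hb hq) (fun _ hs => hasDerivAt_logSqrtSum_sub hb hp hq hs.1)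
    ((intervalIntegrable_iff_integrableOn_Ioc_of_le hbT).2
      (integrableOn_logSqrtSumDeriv_sub hb hp hq))]
  have hT : logSqrtSum (b ^ 2) q T ≤ logSqrtSum p q T :=
    logSqrtSum_le_logSqrtSum hp (hq.trans_le (by gcongr))
  simp only [logSqrtSum, sub_self, sqrt_zero, zero_add] at hT ⊢
  linarith

end Primitive

theorem log_sqrt_add_sqrt_sub_log_sqrt {x y : ℝ} (hx : 0 ≤ x) (hy : 0 < y) :
    log (√x + √y) - log √y = log (1 + x / y + 2 * √(x / y)) / 2 := by
  have hy' : 0 < √y := sqrt_pos.2 hy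
  have hsq : 1 + x / y + 2 * √(x / y) = ((√x + √y) / √y) ^ 2 := by
    rw [sqrt_div hx, div_pow, add_sq, sq_sqrt hx, sq_sqrt hy.le]
    field_simp
    linear_combination (-2 * √x) * sq_sqrt hy.le
  rw [hsq, log_pow, log_div (by positivity) hy'.ne']
  ring

theorem inv_sqrt_sub_inv_sqrt_mul_le {b p q s y : ℝ} (hb : 0 < b) (hbs : b < s)
    (hy : s ^ 2 - b ^ 2 ≤ y) (hyp : y ≤ s ^ 2 - p) :
    ((√(s ^ 2 - b ^ 2))⁻¹ - (√y)⁻¹) * (√(s ^ 2 - q))⁻¹ ≤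
      (logSqrtSumDeriv (b ^ 2) q s - logSqrtSumDeriv p q s) / b := by
  have hA : 0 < s ^ 2 - b ^ 2 := by nlinarith
  have hyP : (√(s ^ 2 - p))⁻¹ ≤ (√y)⁻¹ :=
    inv_anti₀ (sqrt_pos.2 (hA.trans_le hy)) (sqrt_le_sqrt hyp)
  have hAP : (√(s ^ 2 - p))⁻¹ ≤ (√(s ^ 2 - b ^ 2))⁻¹ :=
    inv_anti₀ (sqrt_pos.2 hA) (sqrt_le_sqrt (hy.trans hyp))
  have hsb : 1 ≤ s / b := (one_le_div hb).2 hbs.le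
  calc ((√(s ^ 2 - b ^ 2))⁻¹ - (√y)⁻¹) * (√(s ^ 2 - q))⁻¹
      ≤ ((√(s ^ 2 - b ^ 2))⁻¹ - (√(s ^ 2 - p))⁻¹) * (√(s ^ 2 - q))⁻¹ := by gcongr
    _ ≤ s / b * ((√(s ^ 2 - b ^ 2))⁻¹ - (√(s ^ 2 - p))⁻¹) * (√(s ^ 2 - q))⁻¹ := by
      gcongr
      exact le_mul_of_one_le_left (sub_nonneg.2 hAP) hsb
    _ = (logSqrtSumDeriv (b ^ 2) q s - logSqrtSumDeriv p q s) / b := by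
      unfold logSqrtSumDeriv
      ring

/-- Let `b, c, T, h` be real numbers with `0 ≤ c < b < T` and `h > 0`. Then
`∫_{b}^{T} ((s² − b²)^{−1/2} − ((s+h)² − b²)^{−1/2}) (s² − c²)^{−1/2} ds
  ≤ (1/(2b)) ln(1 + (2Th + h²)/(b² − c²) + 2 √((2Th + h²)/(b² − c²)))`. -/
theorem stmt_12 (b c T h : ℝ) (hc : 0 ≤ c) (hcb : c < b) (hbT : b < T) (hh : 0 < h) :
    (∫⁻ s in Ioo b T,
        ENNReal.ofReal (((Real.sqrt (s ^ 2 - b ^ 2))⁻¹ -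
            (Real.sqrt ((s + h) ^ 2 - b ^ 2))⁻¹) *
          (Real.sqrt (s ^ 2 - c ^ 2))⁻¹)) ≤
      ENNReal.ofReal (1 / (2 * b) *
        Real.log (1 + (2 * T * h + h ^ 2) / (b ^ 2 - c ^ 2) +
          2 * Real.sqrt ((2 * T * h + h ^ 2) / (b ^ 2 - c ^ 2)))) := by
  have hb : 0 < b := hc.trans_lt hcb
  set δ := 2 * T * h + h ^ 2
  have hp : b ^ 2 - δ ≤ b ^ 2 := by nlinarith
  have hq : c ^ 2 < b ^ 2 := by nlinarith
  set g := fun s => (logSqrtSumDeriv (b ^ 2) (c ^ 2) s - logSqrtSumDeriv (b ^ 2 - δ) (c ^ 2) s) / b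
  calc _ ≤ ∫⁻ s in Ioo b T, ENNReal.ofReal (g s) :=
        setLIntegral_mono' measurableSet_Ioo fun s hs => ENNReal.ofReal_le_ofReal <|
          inv_sqrt_sub_inv_sqrt_mul_le hb hs.1 (by nlinarith [hs.1]) (by nlinarith [hs.2])
    _ = ENNReal.ofReal (∫ s in Ioo b T, g s) :=
        (ofReal_integral_eq_lintegral_ofReal
          (((integrableOn_logSqrtSumDeriv_sub hb.le hp hq).mono_set
            Ioo_subset_Ioc_self).div_const b)
          (ae_restrict_of_forall_mem measurableSet_Ioo fun s hs =>
            div_nonneg (logSqrtSumDeriv_sub_nonneg hb.le hp hq hs.1) hb.le)).symm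
    _ ≤ _ := by
      refine ENNReal.ofReal_le_ofReal ?_
      rw [integral_div, ← integral_Ioc_eq_integral_Ioo, ← intervalIntegral.integral_of_le hbT.le]
      calc _ ≤ (log (√(b ^ 2 - (b ^ 2 - δ)) + √(b ^ 2 - c ^ 2)) - log √(b ^ 2 - c ^ 2)) / b :=
            div_le_div_of_nonneg_right (integral_logSqrtSumDeriv_sub_le hb.le hbT.le hp hq) hb.le
        _ = _ := by
          rw [sub_sub_cancel, log_sqrt_add_sqrt_sub_log_sqrt (by linarith) (by linarith)]
          ring
end

section
/- Let 0 ≤ m < 1, t₀ > 0 and K > 0 be fixed, let 0 < α < 1, and let f : (0,∞) → (0,∞) be continuous with ∫₀¹ f(r) r^{1−α} dr < ∞. Define, for h > 0, B(h) = ∫₀^{2 sqrt((1+m)/(1−m)) t₀} ∫_{r sqrt(1−m²)}^{2(1+m)t₀} ∫₀^{π/2} 1_{η(θ) ≤ w/((1−m²) r)} · r f(r) ln(1 + K h^{1/2} / (w r η(θ)/(1−m²) − r² η(θ)²)) (ln(4(1+m)t₀) − ln w) dθ dw dr. Then for every b ∈ (0, α) there exists a constant C > 0 such that B(h) ≤ C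 h^{b/2} for all h ∈ (0, 1). -/
open MeasureTheory Set
open scoped ENNReal

/-- `η(θ) = sqrt(cos²θ/(1−m²)² + sin²θ/(1−m²))`. -/
noncomputable def eta (m θ : ℝ) : ℝ :=
  Real.sqrt (Real.cos θ ^ 2 / (1 - m ^ 2) ^ 2 + Real.sin θ ^ 2 / (1 - m ^ 2))

/-- The modulus-of-continuity bound of Lemma 5 of the paper:
`B(h) = ∫₀^{2√((1+m)/(1−m))t₀} ∫_{r√(1−m²)}^{2(1+m)t₀} ∫₀^{π/2} 1_{η(θ) ≤ w/((1−m²)r)}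
  r f(r) ln(1 + K h^{1/2}/(w r η(θ)/(1−m²) − r² η(θ)²)) (ln(4(1+m)t₀) − ln w) dθ dw dr`. -/
noncomputable def B (m t₀ K : ℝ) (f : ℝ → ℝ) (h : ℝ) : ENNReal :=
  ∫⁻ r in Ioo (0 : ℝ) (2 * Real.sqrt ((1 + m) / (1 - m)) * t₀),
    ∫⁻ w in Ioo (r * Real.sqrt (1 - m ^ 2)) (2 * (1 + m) * t₀),
      ∫⁻ θ in Ioo (0 : ℝ) (Real.pi / 2),
        ENNReal.ofReal
          (if eta m θ ≤ w / ((1 - m ^ 2) * r) then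
            r * f r *
              Real.log (1 + K * Real.sqrt h /
                (w * r * eta m θ / (1 - m ^ 2) - r ^ 2 * eta m θ ^ 2)) *
              (Real.log (4 * (1 + m) * t₀) - Real.log w)
          else 0)

/-!
Write `d = 1 - m²`, `L = 4(1+m)t₀` and `v = w - d r η(θ)`, so that the denominator in `B(h)` is
`r η v / d`. Since `ln(1 + x) ≤ x^b / b` and `η ≥ 1`, the first logarithm is at most
`(K √h d)^b / b · r^{-b} v^{-b}`, and `ln L - ln w ≤ ln(L / v)`. Hence the integrand is at most
`h^{b/2}` times `r^{1-b} f(r)` times `v^{-b} ln(L / v)`, and after translating `w` to `v` the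
integrals decouple: `v^{-b} ln(L / v)` is integrable near `0` because `b < 1`, and
`r^{1-b} f(r) ≤ r^{1-α} f(r)` near `0` because `b < α`.
-/

namespace Real

lemma log_one_add_le_rpow_div {b x : ℝ} (hb0 : 0 < b) (hb1 : b ≤ 1) (hx : 0 ≤ x) :
    log (1 + x) ≤ x ^ b / b := by
  have h1x : 0 < 1 + x := by linarith
  have hsub : (1 + x) ^ b ≤ 1 + x ^ b := by
    simpa using rpow_add_le_add_rpow zero_le_one hx hb0.le hb1
  rw [le_div_iff₀ hb0, mul_comm, ← log_rpow h1x]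
  linarith [log_le_sub_one_of_pos (rpow_pos_of_pos h1x b)]

lemma log_one_add_div_mul_le {a e x b : ℝ} (hb0 : 0 < b) (hb1 : b ≤ 1) (ha : 0 ≤ a)
    (he : 1 ≤ e) (hx : 0 < x) : log (1 + a / (e * x)) ≤ a ^ b / b * x ^ (-b) := by
  calc log (1 + a / (e * x)) ≤ log (1 + a / x) := by
        gcongr
        exact le_mul_of_one_le_left hx.le he
    _ ≤ (a / x) ^ b / b := log_one_add_le_rpow_div hb0 hb1 (by positivity)
    _ = a ^ b / b * x ^ (-b) := by
        rw [div_rpow ha hx.le, rpow_neg hx.le]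
        ring

end Real

open Real

lemma one_le_eta {m : ℝ} (hm : 0 < 1 - m ^ 2) (θ : ℝ) : 1 ≤ eta m θ := by
  have hm1 : 1 - m ^ 2 ≤ 1 := by nlinarith
  have hc : cos θ ^ 2 ≤ cos θ ^ 2 / (1 - m ^ 2) ^ 2 :=
    le_div_self (sq_nonneg _) (by positivity) (pow_le_one₀ hm.le hm1)
  have hs : sin θ ^ 2 ≤ sin θ ^ 2 / (1 - m ^ 2) := le_div_self (sq_nonneg _) hm hm1
  rw [eta, Real.one_le_sqrt]
  linarith [sin_sq_add_cos_sq θ]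

lemma measurable_eta (m : ℝ) : Measurable (eta m) := by
  unfold eta
  fun_prop

lemma setLIntegral_rpow_neg_mul_log_lt_top {b L : ℝ} (hb : b < 1) (hL : 0 ≤ L) (W : ℝ) :
    ∫⁻ v in Ioc 0 W, ENNReal.ofReal (v ^ (-b) * log (L / v)) < ⊤ := by
  set ε := (1 - b) / 2
  have hε : 0 < ε := by simp only [ε]; linarith
  have hint : IntegrableOn (fun v : ℝ => L ^ ε / ε * v ^ (-(b + ε))) (Ioc 0 W) :=
    ((intervalIntegral.intervalIntegrable_rpow' (by simp only [ε]; linarith)).1.const_mul _)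
  refine lt_of_le_of_lt (setLIntegral_mono' measurableSet_Ioc fun v hv =>
    ENNReal.ofReal_le_ofReal ?_) hint.setLIntegral_lt_top
  calc v ^ (-b) * log (L / v) ≤ v ^ (-b) * ((L / v) ^ ε / ε) :=
        mul_le_mul_of_nonneg_left (log_le_rpow_div (div_nonneg hL hv.1.le) hε)
          (rpow_nonneg hv.1.le _)
    _ = L ^ ε / ε * v ^ (-(b + ε)) := by
        rw [div_rpow hL hv.1.le, neg_add, rpow_add hv.1, rpow_neg hv.1.le ε]
        field_simp

lemma continuousOn_rpow_mul {f : ℝ → ℝ} (hf : ContinuousOn f (Ioi 0)) (c : ℝ) :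
    ContinuousOn (fun r => r ^ c * f r) (Ioi 0) :=
  (continuousOn_id.rpow_const fun _ hr => Or.inl (ne_of_gt hr)).mul hf

lemma setLIntegral_rpow_mul_lt_top {f : ℝ → ℝ} {α b : ℝ} (hbα : b ≤ α)
    (hf_cont : ContinuousOn f (Ioi 0)) (hf_nonneg : ∀ r ∈ Ioo (0 : ℝ) 1, 0 ≤ f r)
    (hf_int : ∫⁻ r in Ioo (0 : ℝ) 1, ENNReal.ofReal (f r * r ^ (1 - α)) < ⊤) (R : ℝ) :
    ∫⁻ r in Ioo 0 R, ENNReal.ofReal (r ^ (1 - b) * f r) < ⊤ := by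
  have hsplit : Ioo 0 R ⊆ Ioo 0 1 ∪ Icc 1 (max 1 R) := fun r hr => by
    rcases lt_or_ge r 1 with h | h
    exacts [Or.inl ⟨hr.1, h⟩, Or.inr ⟨h, hr.2.le.trans (le_max_right _ _)⟩]
  have hnear : ∫⁻ r in Ioo 0 1, ENNReal.ofReal (r ^ (1 - b) * f r) < ⊤ := by
    refine lt_of_le_of_lt (setLIntegral_mono' measurableSet_Ioo fun r hr =>
      ENNReal.ofReal_le_ofReal ?_) hf_int
    rw [mul_comm]
    exact mul_le_mul_of_nonneg_left
      (rpow_le_rpow_of_exponent_ge hr.1 hr.2.le (by linarith)) (hf_nonneg r hr)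
  have hfar : ∫⁻ r in Icc 1 (max 1 R), ENNReal.ofReal (r ^ (1 - b) * f r) < ⊤ :=
    ((continuousOn_rpow_mul hf_cont _).mono fun r hr => zero_lt_one.trans_le hr.1)
      |>.integrableOn_Icc.setLIntegral_lt_top
  calc ∫⁻ r in Ioo 0 R, ENNReal.ofReal (r ^ (1 - b) * f r)
      ≤ ∫⁻ r in Ioo 0 1 ∪ Icc 1 (max 1 R), ENNReal.ofReal (r ^ (1 - b) * f r) :=
        lintegral_mono_set hsplit
    _ ≤ _ := lintegral_union_le _ _ _
    _ < ⊤ := ENNReal.add_lt_top.2 ⟨hnear, hfar⟩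

lemma setLIntegral_setLIntegral_comp_sub_le {Φ : ℝ → ℝ≥0∞} (hΦ : Measurable Φ) {g : ℝ → ℝ}
    (hg : Measurable g) (S T : Set ℝ) :
    ∫⁻ w in S, ∫⁻ θ in T, Φ (w - g θ) ≤ volume T * ∫⁻ v, Φ v := by
  have hmeas : Measurable (Function.uncurry fun w θ => Φ (w - g θ)) :=
    hΦ.comp (measurable_fst.sub (hg.comp measurable_snd))
  rw [lintegral_lintegral_swap hmeas.aemeasurable]
  calc ∫⁻ θ in T, ∫⁻ w in S, Φ (w - g θ) ≤ ∫⁻ _ in T, ∫⁻ v, Φ v :=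
        lintegral_mono fun θ =>
          (setLIntegral_le_lintegral _ _).trans (lintegral_sub_right_eq_self Φ (g θ)).le
    _ = volume T * ∫⁻ v, Φ v := by rw [setLIntegral_const, mul_comm]

noncomputable def Bintegrand (m t₀ K : ℝ) (f : ℝ → ℝ) (h r w θ : ℝ) : ℝ :=
  if eta m θ ≤ w / ((1 - m ^ 2) * r) then
    r * f r * log (1 + K * √h / (w * r * eta m θ / (1 - m ^ 2) - r ^ 2 * eta m θ ^ 2)) *
      (log (4 * (1 + m) * t₀) - log w)
  else 0

lemma ofReal_Bintegrand_le {m t₀ K b h r w : ℝ} {f : ℝ → ℝ} (hd : 0 < 1 - m ^ 2) (hK : 0 ≤ K)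
    (hb0 : 0 < b) (hb1 : b ≤ 1) (hr : 0 < r) (hf : 0 ≤ f r) (hw : w ≤ 4 * (1 + m) * t₀)
    (θ : ℝ) :
    ENNReal.ofReal (Bintegrand m t₀ K f h r w θ) ≤
      ENNReal.ofReal ((K * √h * (1 - m ^ 2)) ^ b / b * (r ^ (1 - b) * f r)) *
        (Ioc 0 (4 * (1 + m) * t₀)).indicator
          (fun v => ENNReal.ofReal (v ^ (-b) * log (4 * (1 + m) * t₀ / v)))
          (w - (1 - m ^ 2) * r * eta m θ) := by
  unfold Bintegrand
  set d := 1 - m ^ 2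
  set e := eta m θ
  set L := 4 * (1 + m) * t₀
  set v := w - d * r * e with hv
  have he : 1 ≤ e := one_le_eta hd θ
  split_ifs with hcond
  swap
  · simp
  have hv_nonneg : 0 ≤ v := by
    rw [le_div_iff₀ (by positivity)] at hcond
    linarith
  have hden : w * r * e / d - r ^ 2 * e ^ 2 = e * (r * v) / d := by
    rw [hv]
    field_simp
  rcases hv_nonneg.eq_or_lt with hv0 | hv0
  -- at `v = 0` the denominator vanishes, and `x / 0 = 0` turns the logarithm into `log 1 = 0`
  · simp [hden, ← hv0]
  have hvw : v ≤ w := by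
    have : 0 ≤ d * r * e := by positivity
    linarith
  have hw0 : 0 < w := hv0.trans_le hvw
  rw [indicator_of_mem (show v ∈ Ioc 0 L from ⟨hv0, hvw.trans hw⟩),
    ← ENNReal.ofReal_mul (by positivity)]
  refine ENNReal.ofReal_le_ofReal ?_
  have hlog_h : log (1 + K * √h / (e * (r * v) / d)) ≤
      (K * √h * d) ^ b / b * (r * v) ^ (-b) := by
    rw [div_div_eq_mul_div]
    exact log_one_add_div_mul_le hb0 hb1 (by positivity) he (by positivity)
  have hlog_w : log L - log w ≤ log (L / v) := by
    rw [log_div (hw0.trans_le hw).ne' hv0.ne']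
    linarith [log_le_log hv0 hvw]
  have hlog_w_nonneg : 0 ≤ log L - log w := sub_nonneg.2 (log_le_log hw0 hw)
  rw [hden]
  calc r * f r * log (1 + K * √h / (e * (r * v) / d)) * (log L - log w)
      ≤ r * f r * ((K * √h * d) ^ b / b * (r * v) ^ (-b)) * log (L / v) := by
        gcongr
    _ = (K * √h * d) ^ b / b * (r ^ (1 - b) * f r) * (v ^ (-b) * log (L / v)) := by
        rw [sub_eq_add_neg, rpow_add hr, rpow_one, mul_rpow hr.le hv0.le]
        ring

lemma B_le {m t₀ K b : ℝ} {f : ℝ → ℝ} (hd : 0 < 1 - m ^ 2) (hmt₀ : 0 ≤ (1 + m) * t₀)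
    (hK : 0 ≤ K) (hb0 : 0 < b) (hb1 : b ≤ 1) (hf_cont : ContinuousOn f (Ioi 0))
    (hf_nonneg : ∀ r > (0 : ℝ), 0 ≤ f r) (h : ℝ) :
    B m t₀ K f h ≤ ENNReal.ofReal ((K * √h * (1 - m ^ 2)) ^ b / b) *
      ((∫⁻ r in Ioo 0 (2 * √((1 + m) / (1 - m)) * t₀), ENNReal.ofReal (r ^ (1 - b) * f r)) *
        (volume (Ioo 0 (π / 2)) *
          ∫⁻ v in Ioc 0 (4 * (1 + m) * t₀),
            ENNReal.ofReal (v ^ (-b) * log (4 * (1 + m) * t₀ / v)))) := by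
  set L := 4 * (1 + m) * t₀
  set X := (K * √h * (1 - m ^ 2)) ^ b / b
  set Φ := (Ioc 0 L).indicator fun v => ENNReal.ofReal (v ^ (-b) * log (L / v))
  have hΦ : Measurable Φ := (by fun_prop : Measurable _).indicator measurableSet_Ioc
  have hX : 0 ≤ X := by positivity
  have hΦ_bound : ∀ r, ∀ S : Set ℝ,
      ∫⁻ w in S, ∫⁻ θ in Ioo 0 (π / 2), Φ (w - (1 - m ^ 2) * r * eta m θ) ≤
        volume (Ioo 0 (π / 2)) * ∫⁻ v in Ioc 0 L, ENNReal.ofReal (v ^ (-b) * log (L / v)) :=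
    fun r S =>
      (setLIntegral_setLIntegral_comp_sub_le hΦ ((measurable_eta m).const_mul _) S _).trans_eq
        (by rw [lintegral_indicator measurableSet_Ioc])
  have hslice : ∀ r > (0 : ℝ), ∫⁻ w in Ioo (r * √(1 - m ^ 2)) (2 * (1 + m) * t₀),
      ∫⁻ θ in Ioo 0 (π / 2), ENNReal.ofReal (Bintegrand m t₀ K f h r w θ) ≤
      ENNReal.ofReal (X * (r ^ (1 - b) * f r)) * (volume (Ioo 0 (π / 2)) *
        ∫⁻ v in Ioc 0 L, ENNReal.ofReal (v ^ (-b) * log (L / v))) := by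
    intro r hr
    calc _ ≤ ∫⁻ w in Ioo (r * √(1 - m ^ 2)) (2 * (1 + m) * t₀), ∫⁻ θ in Ioo 0 (π / 2),
          ENNReal.ofReal (X * (r ^ (1 - b) * f r)) * Φ (w - (1 - m ^ 2) * r * eta m θ) :=
          setLIntegral_mono' measurableSet_Ioo fun w hw => lintegral_mono fun θ =>
            ofReal_Bintegrand_le hd hK hb0 hb1 hr (hf_nonneg r hr) (by linarith [hw.2]) θ
      _ = ENNReal.ofReal (X * (r ^ (1 - b) * f r)) *
            ∫⁻ w in Ioo (r * √(1 - m ^ 2)) (2 * (1 + m) * t₀), ∫⁻ θ in Ioo 0 (π / 2),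
              Φ (w - (1 - m ^ 2) * r * eta m θ) := by
          simp only [lintegral_const_mul' _ _ ENNReal.ofReal_ne_top]
      _ ≤ _ := by gcongr; exact hΦ_bound r _
  have hmeas : AEMeasurable (fun r => ENNReal.ofReal (r ^ (1 - b) * f r))
      (volume.restrict (Ioo 0 (2 * √((1 + m) / (1 - m)) * t₀))) :=
    (ENNReal.continuous_ofReal.comp_continuousOn
      ((continuousOn_rpow_mul hf_cont _).mono Ioo_subset_Ioi_self)).aemeasurable measurableSet_Ioo
  refine (setLIntegral_mono' measurableSet_Ioo fun r hr => hslice r hr.1).trans_eq ?_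
  simp only [ENNReal.ofReal_mul hX]
  rw [lintegral_mul_const'' _ (hmeas.const_mul _), lintegral_const_mul' _ _ ENNReal.ofReal_ne_top,
    mul_assoc]

theorem stmt_19_general (m t₀ K α : ℝ) (hm0 : 0 ≤ m) (hm1 : m < 1) (ht₀ : 0 < t₀) (hK : 0 < K)
    (hα1 : α < 1)
    (f : ℝ → ℝ) (hf_cont : ContinuousOn f (Ioi 0)) (hf_pos : ∀ r > (0 : ℝ), 0 < f r)
    (hf_int : (∫⁻ r in Ioo (0 : ℝ) 1, ENNReal.ofReal (f r * r ^ (1 - α))) < ⊤) :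
    ∀ b ∈ Ioo (0 : ℝ) α, ∃ C > (0 : ℝ), ∀ h ∈ Ioo (0 : ℝ) 1,
      B m t₀ K f h ≤ ENNReal.ofReal (C * h ^ (b / 2)) := by
  rintro b ⟨hb0, hbα⟩
  have hd : 0 < 1 - m ^ 2 := by nlinarith
  have hf_nonneg : ∀ r > (0 : ℝ), 0 ≤ f r := fun r hr => (hf_pos r hr).le
  set M := (∫⁻ r in Ioo 0 (2 * √((1 + m) / (1 - m)) * t₀), ENNReal.ofReal (r ^ (1 - b) * f r)) *
        (volume (Ioo 0 (π / 2)) *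
          ∫⁻ v in Ioc 0 (4 * (1 + m) * t₀),
            ENNReal.ofReal (v ^ (-b) * log (4 * (1 + m) * t₀ / v)))
  have hM : M ≠ ⊤ := ENNReal.mul_ne_top
    (setLIntegral_rpow_mul_lt_top hbα.le hf_cont (fun r hr => hf_nonneg r hr.1) hf_int _).ne
    (ENNReal.mul_ne_top measure_Ioo_lt_top.ne
      (setLIntegral_rpow_neg_mul_log_lt_top (hbα.trans hα1) (by positivity) _).ne)
  refine ⟨(K * (1 - m ^ 2)) ^ b / b * (M.toReal + 1), by positivity, fun h hh => ?_⟩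
  have hsqrt : (K * √h * (1 - m ^ 2)) ^ b = (K * (1 - m ^ 2)) ^ b * h ^ (b / 2) := by
    rw [mul_right_comm, mul_rpow (by positivity) (sqrt_nonneg h), sqrt_eq_rpow, ← rpow_mul hh.1.le,
      one_div_mul_eq_div]
  calc B m t₀ K f h ≤ ENNReal.ofReal ((K * √h * (1 - m ^ 2)) ^ b / b) * M :=
        B_le hd (by positivity) hK.le hb0 (hbα.trans hα1).le hf_cont hf_nonneg h
    _ ≤ ENNReal.ofReal ((K * √h * (1 - m ^ 2)) ^ b / b) * ENNReal.ofReal (M.toReal + 1) := by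
        gcongr
        exact (ENNReal.le_ofReal_iff_toReal_le hM (by positivity)).2 (by linarith)
    _ = ENNReal.ofReal ((K * (1 - m ^ 2)) ^ b / b * (M.toReal + 1) * h ^ (b / 2)) := by
        rw [← ENNReal.ofReal_mul (by positivity), hsqrt]
        ring_nf

/-- deterministic core of Theorem 2 of the paper: Let `0 ≤ m < 1`,
`t₀ > 0`, `K > 0`, `0 < α < 1`, and let `f : (0,∞) → (0,∞)` be continuous with
`∫₀¹ f(r) r^{1−α} dr < ∞`. Then for every `b ∈ (0, α)` there is `C > 0` with
`B(h) ≤ C h^{b/2}` for all `h ∈ (0,1)`. -/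
theorem stmt_19 (m t₀ K α : ℝ) (hm0 : 0 ≤ m) (hm1 : m < 1) (ht₀ : 0 < t₀) (hK : 0 < K)
    (hα0 : 0 < α) (hα1 : α < 1)
    (f : ℝ → ℝ) (hf_cont : ContinuousOn f (Ioi 0)) (hf_pos : ∀ r > (0 : ℝ), 0 < f r)
    (hf_int : (∫⁻ r in Ioo (0 : ℝ) 1, ENNReal.ofReal (f r * r ^ (1 - α))) < ⊤) :
    ∀ b ∈ Ioo (0 : ℝ) α, ∃ C > (0 : ℝ), ∀ h ∈ Ioo (0 : ℝ) 1,
      B m t₀ K f h ≤ ENNReal.ofReal (C * h ^ (b / 2)) :=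
  stmt_19_general m t₀ K α hm0 hm1 ht₀ hK hα1 f hf_cont hf_pos hf_int
end
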